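/- (Iterative estimates for a single normalization step.) Let r ≥ 1 and let (h_s)_{s≥0} be a family of homogeneous polynomials with h_s ∈ P_{s+2} and ‖h_s‖ ≤ ℱ_s for nonnegative reals ℱ_s. Let χ ∈ P_{r+2} with expansion χ = Σ_{|k|+|k̃|=r+2} c_{k,k̃} u^k v^k̃ and D = Σ_{k,k̃} |c_{k,k̃}| · max_{1≤j≤n} max(k_j, k̃_j). Define, for each m ≥ 0, the new term h'_m = h_m + Σ_{j≥1, s≥0, s+jr=m} (1/j!) L_χ^j h_s (a finite sum). Then ‖h'_m‖ ≤ ℱ'_m, where ℱ'_m = ℱ_m + Σ_{j≥1, s≥0, s+jr=m} (∏_{i=0}^{j−1}(s+ir+2) / j!) · D^j · ℱ_s. -/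

import Mathlib

/-!
Write `M(d) = max_j max(d_{u_j}, d_{v_j})` for an exponent `d`. For a monomial `c x^d`, each term
of `{c x^d, f}` is a shifted copy of `∂f` with coefficient at most `|c| M(d)`, and for `f`
homogeneous of degree `t` the ℓ¹-norms of the partial derivatives add up to `t ‖f‖` (Euler).
Summing over the monomials of `χ` gives `‖{χ, f}‖ ≤ D t ‖f‖`. Each application of `L_χ` raises
the degree by `r`, so induction on `j` gives `‖L_χ^j h_s‖ ≤ ∏_{i<j} (s + i r + 2) D^j ‖h_s‖`,
and the triangle inequality finishes the proof.
-/

open MvPolynomial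

/-- The Poisson bracket `{f,g} = ∑_j (∂f/∂v_j ∂g/∂u_j − ∂f/∂u_j ∂g/∂v_j)`. -/
noncomputable def poissonBracket (n : ℕ) (f g : MvPolynomial (Fin n ⊕ Fin n) ℂ) :
    MvPolynomial (Fin n ⊕ Fin n) ℂ :=
  ∑ j : Fin n,
    (pderiv (Sum.inr j) f * pderiv (Sum.inl j) g -
      pderiv (Sum.inl j) f * pderiv (Sum.inr j) g)

/-- The ℓ¹-norm `‖f‖ = ∑ |c_{ℓ,ℓ̃}|` of the coefficients of a polynomial. -/
noncomputable def polyNorm (n : ℕ) (f : MvPolynomial (Fin n ⊕ Fin n) ℂ) : ℝ :=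
  ∑ d ∈ f.support, ‖coeff d f‖

/-- The constant `D = ∑_{k,k̃} |c_{k,k̃}| · max_j max(k_j, k̃_j)`. -/
noncomputable def Dconst (n : ℕ) (χ : MvPolynomial (Fin n ⊕ Fin n) ℂ) : ℝ :=
  ∑ d ∈ χ.support,
    ‖coeff d χ‖ *
      ((Finset.univ.sup fun j : Fin n => max (d (Sum.inl j)) (d (Sum.inr j)) : ℕ) : ℝ)

namespace PoissonNormEstimate

variable {n : ℕ}

local notation "Pol" => MvPolynomial (Fin n ⊕ Fin n) ℂ

lemma polyNorm_nonneg (f : Pol) : 0 ≤ polyNorm n f :=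
  Finset.sum_nonneg fun _ _ => norm_nonneg _

lemma polyNorm_eq_sum_of_support_subset (f : Pol) {S : Finset ((Fin n ⊕ Fin n) →₀ ℕ)}
    (hS : f.support ⊆ S) : polyNorm n f = ∑ d ∈ S, ‖coeff d f‖ :=
  Finset.sum_subset hS fun d _ hd => by simp [notMem_support_iff.mp hd]

lemma polyNorm_add_le (f g : Pol) : polyNorm n (f + g) ≤ polyNorm n f + polyNorm n g := by
  rw [polyNorm_eq_sum_of_support_subset (f + g) support_add,
    polyNorm_eq_sum_of_support_subset f Finset.subset_union_left,
    polyNorm_eq_sum_of_support_subset g Finset.subset_union_right, ← Finset.sum_add_distrib]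
  exact Finset.sum_le_sum fun d _ => by simpa only [coeff_add] using norm_add_le _ _

lemma polyNorm_neg (f : Pol) : polyNorm n (-f) = polyNorm n f := by
  simp [polyNorm, support_neg]

lemma polyNorm_sub_le (f g : Pol) : polyNorm n (f - g) ≤ polyNorm n f + polyNorm n g := by
  simpa [sub_eq_add_neg, polyNorm_neg] using polyNorm_add_le f (-g)

lemma polyNorm_sum_le {ι : Type*} (S : Finset ι) (g : ι → Pol) :
    polyNorm n (∑ i ∈ S, g i) ≤ ∑ i ∈ S, polyNorm n (g i) :=
  Finset.le_sum_of_subadditive (polyNorm n) (by simp [polyNorm]) polyNorm_add_le S g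

lemma polyNorm_smul_le (c : ℂ) (f : Pol) : polyNorm n (c • f) ≤ ‖c‖ * polyNorm n f := by
  rw [polyNorm_eq_sum_of_support_subset (c • f) support_smul, polyNorm, Finset.mul_sum]
  exact Finset.sum_le_sum fun d _ => by simp [coeff_smul]

lemma polyNorm_monomial_le (d : (Fin n ⊕ Fin n) →₀ ℕ) (c : ℂ) :
    polyNorm n (monomial d c) ≤ ‖c‖ := by
  by_cases hc : c = 0
  · simp [hc, polyNorm]
  · simp [polyNorm, support_monomial, hc]

lemma polyNorm_map_le_of_monomial (L : Pol →+ Pol) (w : ((Fin n ⊕ Fin n) →₀ ℕ) → ℝ)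
    (hL : ∀ d (c : ℂ), polyNorm n (L (monomial d c)) ≤ ‖c‖ * w d) (f : Pol) :
    polyNorm n (L f) ≤ ∑ d ∈ f.support, ‖coeff d f‖ * w d := by
  conv_lhs => rw [f.as_sum, map_sum]
  exact (polyNorm_sum_le _ _).trans (Finset.sum_le_sum fun d _ => hL d _)

lemma polyNorm_monomial_mul_le (d : (Fin n ⊕ Fin n) →₀ ℕ) (c : ℂ) (g : Pol) :
    polyNorm n (monomial d c * g) ≤ ‖c‖ * polyNorm n g := by
  refine (polyNorm_map_le_of_monomial (AddMonoidHom.mulLeft (monomial d c)) (fun _ => ‖c‖)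
    (fun e a => ?_) g).trans_eq ?_
  · simpa [monomial_mul, mul_comm] using polyNorm_monomial_le (d + e) (c * a)
  · rw [polyNorm, Finset.mul_sum]
    exact Finset.sum_congr rfl fun _ _ => mul_comm _ _

lemma polyNorm_pderiv_le (i : Fin n ⊕ Fin n) (f : Pol) :
    polyNorm n (pderiv i f) ≤ ∑ d ∈ f.support, ‖coeff d f‖ * d i := by
  refine polyNorm_map_le_of_monomial (pderiv i).toAddMonoidHom (fun d => d i) (fun d c => ?_) f
  simpa [pderiv_monomial] using polyNorm_monomial_le (d - Finsupp.single i 1) (c * d i)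

/-- Euler's identity in ℓ¹ form. -/
lemma sum_polyNorm_pderiv_le {t : ℕ} {f : Pol} (hf : f.IsHomogeneous t) :
    ∑ i, polyNorm n (pderiv i f) ≤ t * polyNorm n f := by
  calc ∑ i, polyNorm n (pderiv i f)
      ≤ ∑ i, ∑ d ∈ f.support, ‖coeff d f‖ * d i :=
        Finset.sum_le_sum fun i _ => polyNorm_pderiv_le i f
    _ = ∑ d ∈ f.support, ‖coeff d f‖ * (d.degree : ℝ) := by
        rw [Finset.sum_comm]
        refine Finset.sum_congr rfl fun d _ => ?_
        rw [Finsupp.degree_eq_sum, Nat.cast_sum, Finset.mul_sum]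
    _ = t * polyNorm n f := by
        rw [polyNorm, Finset.mul_sum]
        refine Finset.sum_congr rfl fun d hd => ?_
        have hdeg : d.degree = t :=
          by_contra fun hne => mem_support_iff.mp hd (hf.coeff_eq_zero hne)
        rw [hdeg, mul_comm]

def maxExponent (d : (Fin n ⊕ Fin n) →₀ ℕ) : ℕ :=
  Finset.univ.sup fun j : Fin n => max (d (Sum.inl j)) (d (Sum.inr j))

lemma le_maxExponent (d : (Fin n ⊕ Fin n) →₀ ℕ) (i : Fin n ⊕ Fin n) : d i ≤ maxExponent d := by
  rcases i with j | j <;>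
    exact (Finset.le_sup (f := fun j : Fin n => max (d (Sum.inl j)) (d (Sum.inr j)))
      (Finset.mem_univ j)).trans' (by simp)

lemma Dconst_eq (χ : Pol) :
    Dconst n χ = ∑ d ∈ χ.support, ‖coeff d χ‖ * maxExponent d := rfl

lemma Dconst_nonneg (χ : Pol) : 0 ≤ Dconst n χ :=
  Finset.sum_nonneg fun _ _ => mul_nonneg (norm_nonneg _) (Nat.cast_nonneg _)

lemma polyNorm_poissonBracket_monomial_le (d : (Fin n ⊕ Fin n) →₀ ℕ) (c : ℂ) (f : Pol) :
    polyNorm n (poissonBracket n (monomial d c) f) ≤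
      ‖c‖ * maxExponent d * ∑ i, polyNorm n (pderiv i f) := by
  have hterm : ∀ i k, polyNorm n (pderiv i (monomial d c) * pderiv k f) ≤
      ‖c‖ * maxExponent d * polyNorm n (pderiv k f) := fun i k => by
    rw [pderiv_monomial]
    refine (polyNorm_monomial_mul_le _ _ _).trans
      (mul_le_mul_of_nonneg_right ?_ (polyNorm_nonneg _))
    rw [norm_mul, Complex.norm_natCast]
    gcongr
    exact_mod_cast le_maxExponent d i
  rw [Fintype.sum_sum_type, ← Finset.sum_add_distrib, Finset.mul_sum]
  refine (polyNorm_sum_le _ _).trans (Finset.sum_le_sum fun j _ => ?_)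
  refine (polyNorm_sub_le _ _).trans ?_
  linarith [hterm (Sum.inr j) (Sum.inl j), hterm (Sum.inl j) (Sum.inr j)]

noncomputable def poissonBracketLeft (f : Pol) : Pol →+ Pol :=
  AddMonoidHom.mk' (poissonBracket n · f) fun a b => by
    simp only [poissonBracket, map_add, add_mul, ← Finset.sum_add_distrib]
    exact Finset.sum_congr rfl fun _ _ => by ring

lemma polyNorm_poissonBracket_le {t : ℕ} (χ : Pol) {f : Pol} (hf : f.IsHomogeneous t) :
    polyNorm n (poissonBracket n χ f) ≤ Dconst n χ * t * polyNorm n f := by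
  refine (polyNorm_map_le_of_monomial (poissonBracketLeft f)
    (fun d => maxExponent d * (t * polyNorm n f)) (fun d c => ?_) χ).trans_eq ?_
  · refine (polyNorm_poissonBracket_monomial_le d c f).trans ?_
    rw [← mul_assoc]
    gcongr
    exact sum_polyNorm_pderiv_le hf
  · simp only [Dconst_eq, Finset.sum_mul, mul_assoc]

lemma isHomogeneous_poissonBracket {a b : ℕ} {χ f : Pol} (hχ : χ.IsHomogeneous a)
    (hf : f.IsHomogeneous b) : (poissonBracket n χ f).IsHomogeneous (a - 1 + (b - 1)) :=
  IsHomogeneous.sum _ _ _ fun _ _ =>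
    (hχ.pderiv.mul hf.pderiv).sub (hχ.pderiv.mul hf.pderiv)

variable {r : ℕ} {χ : MvPolynomial (Fin n ⊕ Fin n) ℂ} (hχ : χ.IsHomogeneous (r + 2))
include hχ

lemma isHomogeneous_iterate_poissonBracket {s : ℕ} {f : Pol} (hf : f.IsHomogeneous (s + 2))
    (j : ℕ) : ((poissonBracket n χ)^[j] f).IsHomogeneous (s + j * r + 2) := by
  induction j with
  | zero => simpa using hf
  | succ j ih =>
    rw [Function.iterate_succ_apply']
    convert isHomogeneous_poissonBracket hχ ih using 1
    lia

lemma polyNorm_iterate_poissonBracket_le {s : ℕ} {f : Pol} (hf : f.IsHomogeneous (s + 2))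
    (j : ℕ) : polyNorm n ((poissonBracket n χ)^[j] f) ≤
      (∏ i ∈ Finset.range j, ((s : ℝ) + i * r + 2)) * Dconst n χ ^ j * polyNorm n f := by
  induction j with
  | zero => simp
  | succ j ih =>
    rw [Function.iterate_succ_apply', Finset.prod_range_succ]
    calc polyNorm n (poissonBracket n χ ((poissonBracket n χ)^[j] f))
        ≤ Dconst n χ * ((s + j * r + 2 : ℕ) : ℝ) * polyNorm n ((poissonBracket n χ)^[j] f) :=
          polyNorm_poissonBracket_le χ (isHomogeneous_iterate_poissonBracket hχ hf j)
      _ ≤ Dconst n χ * ((s + j * r + 2 : ℕ) : ℝ) *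
          ((∏ i ∈ Finset.range j, ((s : ℝ) + i * r + 2)) * Dconst n χ ^ j * polyNorm n f) := by
          have := Dconst_nonneg χ
          gcongr
      _ = _ := by push_cast; ring

end PoissonNormEstimate

open PoissonNormEstimate in
theorem stmt7_general (n : ℕ) (r : ℕ)
    (h : ℕ → MvPolynomial (Fin n ⊕ Fin n) ℂ) (F : ℕ → ℝ)
    (hdeg : ∀ s : ℕ, (h s).IsHomogeneous (s + 2))
    (hFs : ∀ s : ℕ, polyNorm n (h s) ≤ F s)
    (χ : MvPolynomial (Fin n ⊕ Fin n) ℂ) (hχ : χ.IsHomogeneous (r + 2)) :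
    ∀ m : ℕ,
      polyNorm n
          (h m + ∑ j ∈ Finset.Icc 1 (m / r),
            ((j.factorial : ℂ)⁻¹) • (poissonBracket n χ)^[j] (h (m - j * r))) ≤
        F m + ∑ j ∈ Finset.Icc 1 (m / r),
          ((∏ i ∈ Finset.range j, (((m - j * r : ℕ) : ℝ) + (i : ℝ) * (r : ℝ) + 2)) /
              (j.factorial : ℝ)) * (Dconst n χ) ^ j * F (m - j * r) := by
  intro m
  refine (polyNorm_add_le _ _).trans (add_le_add (hFs m) ?_)
  refine (polyNorm_sum_le _ _).trans (Finset.sum_le_sum fun j _ => ?_)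
  set s := m - j * r
  have hP : 0 ≤ ∏ i ∈ Finset.range j, ((s : ℝ) + i * r + 2) :=
    Finset.prod_nonneg fun _ _ => by positivity
  have := Dconst_nonneg χ
  calc polyNorm n (((j.factorial : ℂ)⁻¹) • (poissonBracket n χ)^[j] (h s))
      ≤ (j.factorial : ℝ)⁻¹ * polyNorm n ((poissonBracket n χ)^[j] (h s)) := by
        simpa using polyNorm_smul_le ((j.factorial : ℂ)⁻¹) ((poissonBracket n χ)^[j] (h s))
    _ ≤ (j.factorial : ℝ)⁻¹ *
          ((∏ i ∈ Finset.range j, ((s : ℝ) + i * r + 2)) * Dconst n χ ^ j * F s) := by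
        gcongr
        exact (polyNorm_iterate_poissonBracket_le hχ (hdeg s) j).trans (by gcongr; exact hFs s)
    _ = _ := by ring

/-- Iterative estimates for a single normalization step: the new term of degree `m+2` is
`h'_m = h_m + ∑_{j ≥ 1, s ≥ 0, s + j r = m} (1/j!) L_χ^j h_s`; here the pairs `(j,s)`
with `j ≥ 1`, `s ≥ 0`, `s + j r = m` are parametrized by `j ∈ [1, m/r]`, `s = m - j r`. -/
theorem stmt7 (n : ℕ) (hn : 1 ≤ n) (r : ℕ) (hr : 1 ≤ r)
    (h : ℕ → MvPolynomial (Fin n ⊕ Fin n) ℂ) (F : ℕ → ℝ)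
    (hdeg : ∀ s : ℕ, (h s).IsHomogeneous (s + 2))
    (hF0 : ∀ s : ℕ, 0 ≤ F s) (hFs : ∀ s : ℕ, polyNorm n (h s) ≤ F s)
    (χ : MvPolynomial (Fin n ⊕ Fin n) ℂ) (hχ : χ.IsHomogeneous (r + 2)) :
    ∀ m : ℕ,
      polyNorm n
          (h m + ∑ j ∈ Finset.Icc 1 (m / r),
            ((j.factorial : ℂ)⁻¹) • (poissonBracket n χ)^[j] (h (m - j * r))) ≤
        F m + ∑ j ∈ Finset.Icc 1 (m / r),
          ((∏ i ∈ Finset.range j, (((m - j * r : ℕ) : ℝ) + (i : ℝ) * (r : ℝ) + 2)) /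
              (j.factorial : ℝ)) * (Dconst n χ) ^ j * F (m - j * r) :=
  stmt7_general n r h F hdeg hFs χ hχ
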